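/- Let e ≥ 6 be an integer and let u ∈ ℂ⟦X⟧ have nonzero constant coefficient. Set w = X^e · u and let w′ be its formal derivative. Then there exists g ∈ ℂ⟦X⟧ such that w⁵·(1 − w)⁴·g = (w′)⁶, and the order of g equals e − 6. -/

import Mathlib

open PowerSeries

/-!
Write `w = X^e u` with `u` a unit and `e = k + 6`. Then `w′ = X^(e-1) v` with
`v = e u + X u′`, again a unit since `e ≠ 0` in `ℂ`, and `w⁵(1-w)⁴ = X^(5e) h` with `h` a unit.
Hence `(w′)⁶ = X^(5e) · X^k v⁶`, and `g = X^k v⁶ h⁻¹` is the quotient, of order `k = e - 6`.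
-/

namespace PowerSeries

section CommRing

variable {R : Type*} [CommRing R]

theorem derivative_X_pow_succ_mul (n : ℕ) (u : R⟦X⟧) :
    derivative R (X ^ (n + 1) * u) = X ^ n * ((n + 1 : R⟦X⟧) * u + X * derivative R u) := by
  rw [Derivation.leibniz, Derivation.leibniz_pow, derivative_X, Nat.add_sub_cancel]
  simp only [smul_eq_mul, nsmul_eq_mul, mul_one, Nat.cast_add, Nat.cast_one]
  ring

theorem exists_isUnit_derivative_X_pow_succ_mul {n : ℕ} (hn : IsUnit (n + 1 : R)) {u : R⟦X⟧}
    (hu : IsUnit u) : ∃ v : R⟦X⟧, IsUnit v ∧ derivative R (X ^ (n + 1) * u) = X ^ n * v := by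
  refine ⟨_, ?_, derivative_X_pow_succ_mul n u⟩
  rw [isUnit_iff_constantCoeff] at hu ⊢
  simpa using hn.mul hu

theorem isUnit_one_sub_X_pow_succ_mul (n : ℕ) (u : R⟦X⟧) : IsUnit (1 - X ^ (n + 1) * u) := by
  rw [isUnit_iff_constantCoeff]
  simp

end CommRing

section IsDomain

variable {R : Type*} [CommRing R] [IsDomain R]

theorem order_X_pow_mul_of_isUnit (n : ℕ) {f : R⟦X⟧} (hf : IsUnit f) :
    (X ^ n * f).order = (n : ℕ∞) := by
  rw [order_mul, order_X_pow, order_zero_of_unit hf, add_zero]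

theorem exists_X_pow_mul_mul_eq_X_pow_add_mul {h f : R⟦X⟧} (hh : IsUnit h) (hf : IsUnit f)
    (a k : ℕ) : ∃ g : R⟦X⟧, X ^ a * h * g = X ^ (a + k) * f ∧ g.order = k := by
  set h' : R⟦X⟧ := ((hh.unit⁻¹ : R⟦X⟧ˣ) : R⟦X⟧)
  refine ⟨X ^ k * (h' * f), ?_, order_X_pow_mul_of_isUnit k ((Units.isUnit _).mul hf)⟩
  calc X ^ a * h * (X ^ k * (h' * f))
      = X ^ (a + k) * (↑hh.unit * ↑hh.unit⁻¹) * f := by rw [IsUnit.unit_spec, pow_add]; ring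
    _ = X ^ (a + k) * f := by rw [Units.mul_inv, mul_one]

end IsDomain

end PowerSeries

/-- For `w = X^e · u` with `u(0) ≠ 0` and `e ≥ 6`, the series `g` with
`w⁵(1-w)⁴g = (w′)⁶` exists and has order exactly `e - 6`: the degree-6 symmetric
log tensor with pole orders `3, 4, 5` at `0, 1, ∞` pulls back regularly and
nontrivially along a multiplicity-`e` fiber component over `z = ∞`
(in the coordinate `w = 1/z` at infinity). -/
theorem pullback_six_tensor_order_at_infinity (e : ℕ) (he : 6 ≤ e) (u : PowerSeries ℂ)
    (hu : PowerSeries.constantCoeff (R := ℂ) u ≠ 0) :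
    ∃ g : PowerSeries ℂ,
      (PowerSeries.X ^ e * u) ^ 5 * (1 - PowerSeries.X ^ e * u) ^ 4 * g =
        (PowerSeries.derivative ℂ (PowerSeries.X ^ e * u)) ^ 6 ∧
      g.order = (e - 6 : ℕ) := by
  obtain ⟨k, rfl⟩ := Nat.exists_eq_add_of_le' he
  have hu : IsUnit u := isUnit_iff_constantCoeff.mpr hu.isUnit
  have hk : IsUnit ((k + 5 : ℕ) + 1 : ℂ) := Ne.isUnit (by norm_cast)
  obtain ⟨v, hv, hderiv⟩ := exists_isUnit_derivative_X_pow_succ_mul hk hu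
  have hh : IsUnit (u ^ 5 * (1 - X ^ (k + 6) * u) ^ 4) :=
    (hu.pow 5).mul ((isUnit_one_sub_X_pow_succ_mul (k + 5) u).pow 4)
  obtain ⟨g, hg, hord⟩ := exists_X_pow_mul_mul_eq_X_pow_add_mul hh (hv.pow 6) (5 * (k + 6)) k
  refine ⟨g, ?_, by simpa using hord⟩
  calc (X ^ (k + 6) * u) ^ 5 * (1 - X ^ (k + 6) * u) ^ 4 * g
      = X ^ (5 * (k + 6)) * (u ^ 5 * (1 - X ^ (k + 6) * u) ^ 4) * g := by ring
    _ = X ^ (5 * (k + 6) + k) * v ^ 6 := hg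
    _ = (derivative ℂ (X ^ (k + 6) * u)) ^ 6 := by rw [hderiv]; ring
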